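/- The binary matrix C ∈ {0,1}^{4×5} with rows (0,0,0,0,1), (1,1,0,1,0), (0,1,1,0,0), (1,0,1,0,0) is uniquely decodable: the map x ↦ C·x ∈ ℤ^4 is injective on {0,1}^5. In particular there exists an overloaded uniquely decodable binary code set with spreading length L = 4 supporting K = 5 > L users. -/
import Mathlib


/-- The explicit `4 × 5` binary matrix of the paper is uniquely
decodable: `x ↦ C·x` is injective on `{0,1}^5`. This gives an overloaded
uniquely decodable binary code set with `L = 4` and `K = 5 > L` users. -/
theorem stmt_8 :
    ∃ C : Matrix (Fin 4) (Fin 5) ℤ,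
      C = !![0, 0, 0, 0, 1;
             1, 1, 0, 1, 0;
             0, 1, 1, 0, 0;
             1, 0, 1, 0, 0] ∧
      Set.InjOn C.mulVec {x : Fin 5 → ℤ | ∀ i, x i = 0 ∨ x i = 1} ∧
      (5 : ℕ) > 4 := by
  refine ⟨_, rfl, ?_, by norm_num⟩
  intro x hx y hy h
  have e0 := congrFun h 0
  have e1 := congrFun h 1
  have e2 := congrFun h 2
  have e3 := congrFun h 3
  simp [Matrix.mulVec, dotProduct, Fin.sum_univ_five] at e0 e1 e2 e3
  have hx0 := hx 0; have hx1 := hx 1; have hx2 := hx 2; have hx3 := hx 3; have hx4 := hx 4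
  have hy0 := hy 0; have hy1 := hy 1; have hy2 := hy 2; have hy3 := hy 3; have hy4 := hy 4
  funext i
  fin_cases i <;> simp only [Fin.isValue, Fin.zero_eta, Fin.mk_one, show ((⟨2, by omega⟩ : Fin 5)) = 2 from rfl, show ((⟨3, by omega⟩ : Fin 5)) = 3 from rfl, show ((⟨4, by omega⟩ : Fin 5)) = 4 from rfl] <;> omega
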